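/- Let G be a finite graph with loops at all vertices, H = G - uv, and suppose f is an optimal opinion function for G with f(u) = 1 and f(v) = -1 (mixed opinions). Then -2 ≤ γ(G) - γ(H) ≤ 2. -/

import Mathlib

/-!
Deleting the edge `uv` changes only the neighbourhood sums at `u` and `v`, by `f v` and `f u`
respectively. Turning a `-1` opinion at `x` into `1` (adding `Pi.single x 2`) raises by 2 every
neighbourhood sum containing `x` and costs 2 in total. From an optimal `f` on `G` with
`f v = -1`, flipping `v` makes up for the loss at `v` in `H = G - uv`, so `γ(H) ≤ γ(G) + 2`.
Conversely, from an optimal `g` on `H`: if `g u, g v ≥ 0`, restoring the edge only helps;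
otherwise flipping an endpoint with opinion `-1` makes up for the loss of at most 1 at both
endpoints, so `γ(G) ≤ γ(H) + 2`.
-/

open scoped Classical
open Finset

/-- Sum of opinions over the closed neighborhood of `v` (closed since every
vertex has a loop, so `v` itself is counted). -/
noncomputable def nbrSum {V : Type*} [Fintype V] (G : SimpleGraph V) (f : V → ℤ) (v : V) : ℤ :=
  ∑ w ∈ univ.filter (fun w => G.Adj v w ∨ w = v), f w

/-- `f` is an opinion function: every value is `1` or `-1`. -/
def IsOpinion {V : Type*} (f : V → ℤ) : Prop := ∀ v, f v = 1 ∨ f v = -1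

/-- The set of vertices voting 'yes'. -/
noncomputable def yesVoters {V : Type*} [Fintype V] (G : SimpleGraph V) (f : V → ℤ) : Finset V :=
  univ.filter (fun v => 0 < nbrSum G f v)

/-- `f` is strictly majoritarian on `G`: more than `|V|/2` vertices vote 'yes'. -/
def Majoritarian {V : Type*} [Fintype V] (G : SimpleGraph V) (f : V → ℤ) : Prop :=
  Fintype.card V < 2 * (yesVoters G f).card

/-- The strict domination number: minimum of `f(V)` over strictly majoritarian
opinion functions. -/
noncomputable def gamma {V : Type*} [Fintype V] (G : SimpleGraph V) : ℤ :=
  sInf {t : ℤ | ∃ f : V → ℤ, IsOpinion f ∧ Majoritarian G f ∧ t = ∑ v, f v}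

namespace IsOpinion

variable {V : Type*} {f : V → ℤ}

lemma neg_one_le (hf : IsOpinion f) (x : V) : -1 ≤ f x := by
  rcases hf x with h | h <;> omega

lemma le_one (hf : IsOpinion f) (x : V) : f x ≤ 1 := by
  rcases hf x with h | h <;> omega

lemma add_single_two [DecidableEq V] (hf : IsOpinion f) {x : V} (hx : f x = -1) :
    IsOpinion (f + Pi.single x 2) := by
  intro w
  by_cases hw : w = x
  · subst hw; simp [hx]
  · simpa [Pi.single_apply, hw] using hf w

lemma neg_card_le_sum [Fintype V] (hf : IsOpinion f) : -(Fintype.card V : ℤ) ≤ ∑ w, f w := by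
  simpa using card_nsmul_le_sum univ f (-1) (fun w _ => hf.neg_one_le w)

end IsOpinion

section

variable {V : Type*} [Fintype V]

lemma sum_add_single (f : V → ℤ) (x : V) (c : ℤ) :
    ∑ w, (f + Pi.single x c : V → ℤ) w = ∑ w, f w + c := by
  simp [sum_add_distrib]

lemma nbrSum_add (G : SimpleGraph V) (f g : V → ℤ) (w : V) :
    nbrSum G (f + g) w = nbrSum G f w + nbrSum G g w :=
  sum_add_distrib

lemma nbrSum_single (G : SimpleGraph V) (x : V) (c : ℤ) (w : V) :
    nbrSum G (Pi.single x c) w = if G.Adj w x ∨ x = w then c else 0 := by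
  simp [nbrSum, sum_pi_single']

lemma nbrSum_deleteEdges {G : SimpleGraph V} {u v : V} (hadj : G.Adj u v) (g : V → ℤ) (w : V) :
    nbrSum G g w = nbrSum (G.deleteEdges {s(u, v)}) g w
      + (if w = u then g v else 0) + (if w = v then g u else 0) := by
  have hpt : ∀ x, (if G.Adj w x ∨ x = w then g x else 0)
      = (if (G.deleteEdges {s(u, v)}).Adj w x ∨ x = w then g x else 0)
        + (if w = u then (if x = v then g x else 0) else 0)
        + (if w = v then (if x = u then g x else 0) else 0) := by
    intro x
    have := hadj.ne
    by_cases hwu : w = u <;> by_cases hwv : w = v <;> by_cases hxu : x = u <;>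
      by_cases hxv : x = v <;> simp_all [SimpleGraph.deleteEdges_adj, hadj.symm]
  simp only [nbrSum, sum_filter, sum_congr rfl (fun x _ => hpt x), sum_add_distrib]
  simp [sum_ite_irrel]

lemma Majoritarian.of_nbrSum_le {A B : SimpleGraph V} {f g : V → ℤ} (hf : Majoritarian A f)
    (h : ∀ w, nbrSum A f w ≤ nbrSum B g w) : Majoritarian B g := by
  have : yesVoters A f ⊆ yesVoters B g := fun w hw => by
    simp only [yesVoters, mem_filter, mem_univ, true_and] at hw ⊢
    exact hw.trans_le (h w)
  have := card_le_card this
  unfold Majoritarian at hf ⊢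
  omega

lemma bddBelow_gammaSet (G : SimpleGraph V) :
    BddBelow {t : ℤ | ∃ f : V → ℤ, IsOpinion f ∧ Majoritarian G f ∧ t = ∑ v, f v} :=
  ⟨-(Fintype.card V : ℤ), by rintro _ ⟨f, hf, -, rfl⟩; exact hf.neg_card_le_sum⟩

lemma gamma_le_sum {G : SimpleGraph V} {f : V → ℤ} (hf : IsOpinion f)
    (hmaj : Majoritarian G f) : gamma G ≤ ∑ w, f w :=
  csInf_le (bddBelow_gammaSet G) ⟨f, hf, hmaj, rfl⟩

lemma exists_sum_eq_gamma {G : SimpleGraph V} {f : V → ℤ} (hf : IsOpinion f)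
    (hmaj : Majoritarian G f) :
    ∃ g, IsOpinion g ∧ Majoritarian G g ∧ ∑ w, g w = gamma G := by
  obtain ⟨g, hg, hgmaj, hsum⟩ :=
    Int.csInf_mem
      (s := {t | ∃ f : V → ℤ, IsOpinion f ∧ Majoritarian G f ∧ t = ∑ v, f v})
      ⟨_, f, hf, hmaj, rfl⟩ (bddBelow_gammaSet G)
  exact ⟨g, hg, hgmaj, hsum.symm⟩

lemma Majoritarian.deleteEdges_add_single {G : SimpleGraph V} {u v : V} {f : V → ℤ}
    (hmaj : Majoritarian G f) (hadj : G.Adj u v) (hf : IsOpinion f) (hv : f v = -1) :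
    Majoritarian (G.deleteEdges {s(u, v)}) (f + Pi.single v 2) := by
  refine hmaj.of_nbrSum_le fun w => ?_
  rw [nbrSum_deleteEdges hadj, nbrSum_add, nbrSum_single, hv]
  have := hf.le_one u
  by_cases hwv : w = v
  · subst hwv; simp only [hadj.ne.symm, or_true, if_true, if_false]; omega
  · split_ifs <;> omega

lemma Majoritarian.of_deleteEdges {G : SimpleGraph V} {u v : V} {g : V → ℤ}
    (hmaj : Majoritarian (G.deleteEdges {s(u, v)}) g) (hadj : G.Adj u v)
    (hu : 0 ≤ g u) (hv : 0 ≤ g v) :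
    Majoritarian G g := by
  refine hmaj.of_nbrSum_le fun w => ?_
  rw [nbrSum_deleteEdges hadj]
  split_ifs <;> omega

lemma Majoritarian.of_deleteEdges_add_single {G : SimpleGraph V} {u v x : V} {g : V → ℤ}
    (hmaj : Majoritarian (G.deleteEdges {s(u, v)}) g) (hadj : G.Adj u v) (hg : IsOpinion g)
    (hx : x = u ∨ x = v) : Majoritarian G (g + Pi.single x 2) := by
  refine hmaj.of_nbrSum_le fun w => ?_
  rw [nbrSum_add, nbrSum_deleteEdges hadj g, nbrSum_single]
  have := hg.neg_one_le u
  have := hg.neg_one_le v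
  have hux : G.Adj u x ∨ x = u := by rcases hx with rfl | rfl <;> simp [hadj]
  have hvx : G.Adj v x ∨ x = v := by rcases hx with rfl | rfl <;> simp [hadj.symm]
  by_cases hwu : w = u
  · subst hwu; simp only [hux, hadj.ne, if_true, if_false]; omega
  by_cases hwv : w = v
  · subst hwv; simp only [hvx, hwu, if_true, if_false]; omega
  split_ifs <;> omega

lemma gamma_le_sum_add_two_of_deleteEdges {G : SimpleGraph V} {u v : V} (hadj : G.Adj u v)
    {g : V → ℤ} (hg : IsOpinion g) (hmaj : Majoritarian (G.deleteEdges {s(u, v)}) g) :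
    gamma G ≤ ∑ w, g w + 2 := by
  by_cases hpos : 0 ≤ g u ∧ 0 ≤ g v
  · have := gamma_le_sum hg (hmaj.of_deleteEdges hadj hpos.1 hpos.2)
    omega
  · obtain ⟨x, hx, hgx⟩ : ∃ x, (x = u ∨ x = v) ∧ g x = -1 := by
      rcases hg u with hu | hu <;> rcases hg v with hv | hv
      · omega
      exacts [⟨v, .inr rfl, hv⟩, ⟨u, .inl rfl, hu⟩, ⟨u, .inl rfl, hu⟩]
    have := gamma_le_sum (hg.add_single_two hgx)
      (hmaj.of_deleteEdges_add_single hadj hg hx)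
    rwa [sum_add_single] at this

end

theorem stmt3_general {V : Type*} [Fintype V] (G : SimpleGraph V) (u v : V) (f : V → ℤ)
    (hadj : G.Adj u v)
    (hf : IsOpinion f) (hmaj : Majoritarian G f) (hopt : ∑ w, f w = gamma G)
    (hv : f v = -1) :
    -2 ≤ gamma G - gamma (G.deleteEdges {s(u, v)}) ∧
      gamma G - gamma (G.deleteEdges {s(u, v)}) ≤ 2 := by
  have hf' := hf.add_single_two hv
  have hmaj' := hmaj.deleteEdges_add_single hadj hf hv
  have hH : gamma (G.deleteEdges {s(u, v)}) ≤ gamma G + 2 := by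
    have := gamma_le_sum hf' hmaj'
    rwa [sum_add_single, hopt] at this
  obtain ⟨g, hg, hgmaj, hgsum⟩ := exists_sum_eq_gamma hf' hmaj'
  have hG := gamma_le_sum_add_two_of_deleteEdges hadj hg hgmaj
  omega

theorem stmt3 {V : Type*} [Fintype V] [Nonempty V] (G : SimpleGraph V) (u v : V) (f : V → ℤ)
    (huv : u ≠ v) (hadj : G.Adj u v)
    (hf : IsOpinion f) (hmaj : Majoritarian G f) (hopt : ∑ w, f w = gamma G)
    (hu : f u = 1) (hv : f v = -1) :
    -2 ≤ gamma G - gamma (G.deleteEdges {s(u, v)}) ∧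
      gamma G - gamma (G.deleteEdges {s(u, v)}) ≤ 2 :=
  stmt3_general G u v f hadj hf hmaj hopt hv
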